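/- arXiv:2006.09095 — 7 statements merged into one kernel-verified Lean document; each statement's English description precedes it below -/
import Mathlib

section
/- Let 𝓕 be a family of holomorphic functions on a domain D ⊆ ℂ. If the Julia like set J(𝓕) has an isolated point, then there exists a nonempty open set U ⊆ F(𝓕) such that ℂ \ ⋃_{f ∈ 𝓕} f(U) contains at most one point. -/
open Filter Topology Set

/-- Locally uniform divergence to `∞` on the set `s`: on every compact subset of `s`,
the moduli eventually exceed every bound, uniformly. -/
def TendstoLocallyUniformlyOnInfty (F : ℕ → ℂ → ℂ) (s : Set ℂ) : Prop :=
  ∀ K ⊆ s, IsCompact K → ∀ M : ℝ, ∀ᶠ n in Filter.atTop, ∀ z ∈ K, M ≤ ‖F n z‖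

/-- The family `𝓕` of functions holomorphic on `D` is normal at `z₀ ∈ D`: there is a
neighborhood `N ⊆ D` of `z₀` on which every sequence from `𝓕` has a subsequence converging
locally uniformly either to a holomorphic function or to `∞`. -/
def NormalAt (D : Set ℂ) (𝓕 : Set (ℂ → ℂ)) (z₀ : ℂ) : Prop :=
  ∃ N, N ⊆ D ∧ N ∈ 𝓝 z₀ ∧ ∀ f : ℕ → ℂ → ℂ, (∀ n, f n ∈ 𝓕) →
    ∃ φ : ℕ → ℕ, StrictMono φ ∧
      ((∃ g : ℂ → ℂ, DifferentiableOn ℂ g N ∧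
          TendstoLocallyUniformlyOn (fun n => f (φ n)) g Filter.atTop N) ∨
        TendstoLocallyUniformlyOnInfty (fun n => f (φ n)) N)

/-- The Fatou like set of `𝓕` on `D`: points of `D` where `𝓕` is normal. -/
def FatouSet (D : Set ℂ) (𝓕 : Set (ℂ → ℂ)) : Set ℂ := {z | z ∈ D ∧ NormalAt D 𝓕 z}

/-- The Julia like set of `𝓕` on `D`. -/
def JuliaSet (D : Set ℂ) (𝓕 : Set (ℂ → ℂ)) : Set ℂ := D \ FatouSet D 𝓕

/-- The backward orbit of `z` with respect to `𝓕`. -/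
def BackwardOrbit (D : Set ℂ) (𝓕 : Set (ℂ → ℂ)) (z : ℂ) : Set ℂ :=
  {w | w ∈ D ∧ ∃ f ∈ 𝓕, f w = z}

/-- The exceptional set of `𝓕`: points with finite backward orbit. -/
def ExceptionalSet (D : Set ℂ) (𝓕 : Set (ℂ → ℂ)) : Set ℂ :=
  {z | (BackwardOrbit D 𝓕 z).Finite}

/-- The escaping like set `I(𝓕)`: points `z ∈ D` such that `f n z → ∞` for every
infinite (i.e. injective) sequence `f` in `𝓕`. -/
def EscapingSet (D : Set ℂ) (𝓕 : Set (ℂ → ℂ)) : Set ℂ :=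
  {z | z ∈ D ∧ ∀ f : ℕ → ℂ → ℂ, (∀ n, f n ∈ 𝓕) → Function.Injective f →
    Filter.Tendsto (fun n => ‖f n z‖) Filter.atTop Filter.atTop}

/-- The generalized escaping like set `U(𝓕)`: points `z ∈ D` such that `f n z → ∞` for some
sequence `f` in `𝓕`. -/
def GenEscapingSet (D : Set ℂ) (𝓕 : Set (ℂ → ℂ)) : Set ℂ :=
  {z | z ∈ D ∧ ∃ f : ℕ → ℂ → ℂ, (∀ n, f n ∈ 𝓕) ∧
    Filter.Tendsto (fun n => ‖f n z‖) Filter.atTop Filter.atTop}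

/-- A transcendental entire function: entire and not a polynomial. -/
def TranscendentalEntire (f : ℂ → ℂ) : Prop :=
  Differentiable ℂ f ∧ ¬ ∃ p : Polynomial ℂ, ∀ z, f z = p.eval z

/-- Boundary of `A` relative to `D`; for `D` open and `A ⊆ D` this coincides with the
boundary of `A` in the subspace topology of `D`. -/
def relBoundary (D A : Set ℂ) : Set ℂ := D ∩ frontier A

/-- Closure of `A` in `D`; for `D` open and `A ⊆ D` this coincides with the closure of `A`
in the subspace topology of `D`. -/
def relClosure (D A : Set ℂ) : Set ℂ := D ∩ closure A

/-! Let `U` be a punctured disc around the isolated point `z₀` of `J(𝓕)`, so `U ⊆ F(𝓕)`.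
If two values `a ≠ b` were omitted by every `f ∈ 𝓕` on `U`, each `f` would omit one of them on
the whole disc, as `f z₀` equals at most one of them; this forces normality at `z₀`. Given a
sequence in `𝓕`, pass to a subsequence omitting a fixed value `c`, and then, by normality on a
circle around `z₀`, compactness and a diagonal argument, to one converging locally uniformly
near each point of the circle, to a holomorphic function or to `∞`. The circle is connected,
so the kind of limit is the same all along it. The maximum modulus principle, applied to the
differences `f m - f n`, resp. to `1 / (f n - c)`, carries uniform convergence from the circle
to the closed disc. -/

open Metric

section Subsequences

theorem exists_strictMono_forall_or_forall {P Q : ℕ → Prop} (h : ∀ n, P n ∨ Q n) :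
    ∃ φ : ℕ → ℕ, StrictMono φ ∧ ((∀ n, P (φ n)) ∨ ∀ n, Q (φ n)) := by
  by_cases hP : ∃ᶠ n in atTop, P n
  · obtain ⟨φ, hφ, hPφ⟩ := extraction_of_frequently_atTop hP
    exact ⟨φ, hφ, Or.inl hPφ⟩
  · have hQ : ∃ᶠ n in atTop, Q n :=
      (not_frequently.mp hP).frequently.mono fun n hn => (h n).resolve_left hn
    obtain ⟨φ, hφ, hQφ⟩ := extraction_of_frequently_atTop hQ
    exact ⟨φ, hφ, Or.inr hQφ⟩

theorem Finset.exists_common_subsequence {ι α : Type*} {s : Set α} {P : ι → (ℕ → α) → Prop}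
    (hP : ∀ i u φ, StrictMono φ → P i u → P i (u ∘ φ)) (I : Finset ι)
    (h : ∀ i ∈ I, ∀ u : ℕ → α, (∀ n, u n ∈ s) → ∃ φ, StrictMono φ ∧ P i (u ∘ φ))
    (u : ℕ → α) (hu : ∀ n, u n ∈ s) :
    ∃ φ : ℕ → ℕ, StrictMono φ ∧ ∀ i ∈ I, P i (u ∘ φ) := by
  induction I using Finset.cons_induction generalizing u with
  | empty => exact ⟨id, strictMono_id, by simp⟩
  | cons j I hj ih =>
    obtain ⟨φ₁, hφ₁, hI⟩ := ih (fun i hi => h i (Finset.mem_cons_of_mem hi)) u hu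
    obtain ⟨φ₂, hφ₂, hj⟩ := h j (Finset.mem_cons_self j I) (u ∘ φ₁) fun n => hu _
    refine ⟨φ₁ ∘ φ₂, hφ₁.comp hφ₂, fun i hi => ?_⟩
    rcases Finset.mem_cons.mp hi with rfl | hi
    · exact hj
    · exact hP i _ φ₂ hφ₂ (hI i hi)

end Subsequences

section LocallyUniform

variable {ι α β : Type*} [UniformSpace β]

theorem UniformCauchySeqOn.exists_tendstoUniformlyOn [CompleteSpace β] [Nonempty β]
    {F : ι → α → β} {p : Filter ι} [p.NeBot] {s : Set α} (hF : UniformCauchySeqOn F p s) :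
    ∃ g, TendstoUniformlyOn F g p s :=
  ⟨fun x => lim (p.map fun i => F i x), hF.tendstoUniformlyOn_of_tendsto fun _ hx =>
    le_nhds_lim (CompleteSpace.complete (hF.cauchy_map hx))⟩

variable [TopologicalSpace α]

theorem TendstoLocallyUniformlyOn.comp_tendsto {F : ι → α → β} {f : α → β} {p : Filter ι}
    {s : Set α} {κ : Type*} {q : Filter κ} {φ : κ → ι}
    (h : TendstoLocallyUniformlyOn F f p s) (hφ : Tendsto φ q p) :
    TendstoLocallyUniformlyOn (F ∘ φ) f q s := fun u hu x hx =>
  (h u hu x hx).imp fun _ ⟨ht, hev⟩ => ⟨ht, hφ.eventually hev⟩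

theorem IsCompact.eventually_forall_of_forall_eventually_prod {K : Set α} (hK : IsCompact K)
    {l : Filter ι} {P : ι → α → Prop} (h : ∀ x ∈ K, ∀ᶠ q in l ×ˢ 𝓝 x, P q.1 q.2) :
    ∀ᶠ i in l, ∀ x ∈ K, P i x :=
  eventually_prod_principal_iff.mp <|
    Filter.Eventually.filter_mono (prod_mono_right l principal_le_nhdsSet)
      (hK.mem_prod_nhdsSet_of_forall h)

theorem IsCompact.uniformCauchySeqOn_of_forall_nhds {F : ι → α → β} {p : Filter ι} {K : Set α}
    (hK : IsCompact K) (h : ∀ x ∈ K, ∃ N ∈ 𝓝 x, ∃ g, TendstoLocallyUniformlyOn F g p N) :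
    UniformCauchySeqOn F p K := by
  intro u hu
  refine hK.eventually_forall_of_forall_eventually_prod fun x hx => ?_
  obtain ⟨N, hN, g, hg⟩ := h x hx
  have hfilter := tendstoLocallyUniformlyOn_iff_filter.mp hg x (mem_of_mem_nhds hN)
  rw [nhdsWithin_eq_nhds.mpr hN] at hfilter
  exact hfilter.uniformCauchySeqOnFilter u hu

end LocallyUniform

section MaximumModulus

variable {E : Type*} [NormedAddCommGroup E] [NormedSpace ℂ E]

theorem norm_le_of_forall_mem_sphere_norm_le {f : ℂ → E} {c : ℂ} {ρ C : ℝ} (hρ : ρ ≠ 0)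
    (hf : DifferentiableOn ℂ f (closedBall c ρ)) (hC : ∀ z ∈ sphere c ρ, ‖f z‖ ≤ C)
    {z : ℂ} (hz : z ∈ closedBall c ρ) : ‖f z‖ ≤ C := by
  rw [← closure_ball c hρ] at hf hz
  exact Complex.norm_le_of_forall_mem_frontier_norm_le isBounded_ball hf.diffContOnCl
    (by rwa [frontier_ball c hρ]) hz

/-- Minimum modulus principle, via the maximum modulus principle for `g⁻¹`. -/
theorem le_norm_of_forall_mem_sphere_le_norm {g : ℂ → ℂ} {c : ℂ} {ρ R : ℝ} (hρ : ρ ≠ 0)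
    (hg : DifferentiableOn ℂ g (closedBall c ρ)) (hg0 : ∀ z ∈ closedBall c ρ, g z ≠ 0)
    (hR : ∀ z ∈ sphere c ρ, R ≤ ‖g z‖) {z : ℂ} (hz : z ∈ closedBall c ρ) : R ≤ ‖g z‖ := by
  rcases le_or_gt R 0 with hR0 | hR0
  · exact hR0.trans (norm_nonneg _)
  have hinv : ‖(g z)⁻¹‖ ≤ R⁻¹ :=
    norm_le_of_forall_mem_sphere_norm_le (f := fun x => (g x)⁻¹) hρ (hg.inv hg0)
      (fun w hw => by rw [norm_inv]; exact inv_anti₀ hR0 (hR w hw)) hz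
  rw [norm_inv] at hinv
  exact (inv_le_inv₀ (norm_pos_iff.mpr (hg0 z hz)) hR0).mp hinv

theorem UniformCauchySeqOn.closedBall_of_sphere {F : ℕ → ℂ → E} {c : ℂ} {ρ : ℝ} (hρ : ρ ≠ 0)
    (hF : ∀ n, DifferentiableOn ℂ (F n) (closedBall c ρ))
    (h : UniformCauchySeqOn F atTop (sphere c ρ)) :
    UniformCauchySeqOn F atTop (closedBall c ρ) := by
  rw [Metric.uniformCauchySeqOn_iff] at h ⊢
  intro ε hε
  obtain ⟨N, hN⟩ := h (ε / 2) (half_pos hε)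
  refine ⟨N, fun m hm n hn z hz => ?_⟩
  have hdiff : ‖F m z - F n z‖ ≤ ε / 2 :=
    norm_le_of_forall_mem_sphere_norm_le (f := fun x => F m x - F n x) hρ
      ((hF m).sub (hF n))
      (fun w hw => by rw [← dist_eq_norm]; exact (hN m hm n hn w hw).le) hz
  rw [dist_eq_norm]
  linarith

end MaximumModulus

section NormalFamilies

/-- The alternative in the definition of `NormalAt`. -/
def HasNormalLimitOn (F : ℕ → ℂ → ℂ) (N : Set ℂ) : Prop :=
  (∃ g : ℂ → ℂ, DifferentiableOn ℂ g N ∧ TendstoLocallyUniformlyOn F g atTop N) ∨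
    TendstoLocallyUniformlyOnInfty F N

variable {F : ℕ → ℂ → ℂ} {N K : Set ℂ}

theorem TendstoLocallyUniformlyOnInfty.comp_strictMono (h : TendstoLocallyUniformlyOnInfty F N)
    {φ : ℕ → ℕ} (hφ : StrictMono φ) : TendstoLocallyUniformlyOnInfty (F ∘ φ) N :=
  fun K hK hKc M => hφ.tendsto_atTop.eventually (h K hK hKc M)

theorem HasNormalLimitOn.comp_strictMono (h : HasNormalLimitOn F N) {φ : ℕ → ℕ}
    (hφ : StrictMono φ) : HasNormalLimitOn (F ∘ φ) N :=
  h.imp (fun ⟨g, hg, hFg⟩ => ⟨g, hg, hFg.comp_tendsto hφ.tendsto_atTop⟩)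
    (·.comp_strictMono hφ)

theorem TendstoLocallyUniformlyOnInfty.tendsto_norm_atTop
    (h : TendstoLocallyUniformlyOnInfty F N) {z : ℂ} (hz : z ∈ N) :
    Tendsto (fun n => ‖F n z‖) atTop atTop :=
  tendsto_atTop.mpr fun M =>
    (h {z} (singleton_subset_iff.mpr hz) isCompact_singleton M).mono fun _ hn => hn z rfl

theorem TendstoLocallyUniformlyOnInfty.eventually_prod_nhds
    (h : TendstoLocallyUniformlyOnInfty F N) {z : ℂ} (hN : N ∈ 𝓝 z) (M : ℝ) :
    ∀ᶠ q in atTop ×ˢ 𝓝 z, M ≤ ‖F q.1 q.2‖ := by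
  obtain ⟨K, hKz, hKN, hK⟩ := local_compact_nhds hN
  exact mem_of_superset (prod_mem_prod (h K hKN hK M) hKz) fun q ⟨hn, hq⟩ => hn q.2 hq

theorem IsCompact.eventually_forall_le_norm_of_forall_nhds (hK : IsCompact K)
    (h : ∀ z ∈ K, ∃ N ∈ 𝓝 z, TendstoLocallyUniformlyOnInfty F N) (M : ℝ) :
    ∀ᶠ n in atTop, ∀ z ∈ K, M ≤ ‖F n z‖ :=
  hK.eventually_forall_of_forall_eventually_prod fun z hz =>
    let ⟨_, hN, hF⟩ := h z hz
    hF.eventually_prod_nhds hN M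

/-- The points near which `F` tends to `∞` and those near which it converges form disjoint open
sets. -/
theorem IsPreconnected.forall_nhds_infty_or_forall_nhds_tendsto (hK : IsPreconnected K)
    (h : ∀ z ∈ K, ∃ N ∈ 𝓝 z, HasNormalLimitOn F N) :
    (∀ z ∈ K, ∃ N ∈ 𝓝 z, TendstoLocallyUniformlyOnInfty F N) ∨
      ∀ z ∈ K, ∃ N ∈ 𝓝 z, ∃ g, TendstoLocallyUniformlyOn F g atTop N := by
  set A := {z | ∃ N ∈ 𝓝 z, TendstoLocallyUniformlyOnInfty F N}
  set B := {z | ∃ N ∈ 𝓝 z, ∃ g, TendstoLocallyUniformlyOn F g atTop N}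
  have hA : IsOpen A := isOpen_iff_mem_nhds.mpr fun _ ⟨N, hN, hF⟩ =>
    (eventually_mem_nhds_iff.mpr hN).mono fun _ hy => ⟨N, hy, hF⟩
  have hB : IsOpen B := isOpen_iff_mem_nhds.mpr fun _ ⟨N, hN, hF⟩ =>
    (eventually_mem_nhds_iff.mpr hN).mono fun _ hy => ⟨N, hy, hF⟩
  have hAB : Disjoint A B := disjoint_left.mpr fun _ ⟨_, hN, hinf⟩ ⟨_, hN', _, hg⟩ =>
    not_tendsto_atTop_of_tendsto_nhds (hg.tendsto_at (mem_of_mem_nhds hN')).norm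
      (hinf.tendsto_norm_atTop (mem_of_mem_nhds hN))
  have hKAB : K ⊆ A ∪ B := fun z hz =>
    let ⟨N, hN, hF⟩ := h z hz
    hF.elim (fun ⟨g, _, hg⟩ => Or.inr ⟨N, hN, g, hg⟩) fun hinf => Or.inl ⟨N, hN, hinf⟩
  rcases (K ∩ A).eq_empty_or_nonempty with hKA | hKA
  · exact Or.inr fun z hz => (hKAB hz).resolve_left fun hzA => hKA.subset ⟨hz, hzA⟩
  · exact Or.inl (hK.subset_left_of_subset_union hA hB hAB hKAB hKA)

theorem IsCompact.exists_strictMono_forall_nhds_hasNormalLimitOn {D : Set ℂ} {𝓕 : Set (ℂ → ℂ)}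
    (hK : IsCompact K) (h : ∀ w ∈ K, NormalAt D 𝓕 w) (f : ℕ → ℂ → ℂ) (hf : ∀ n, f n ∈ 𝓕) :
    ∃ φ : ℕ → ℕ, StrictMono φ ∧ ∀ z ∈ K, ∃ N ∈ 𝓝 z, HasNormalLimitOn (f ∘ φ) N := by
  have hlocal : ∀ w ∈ K, ∃ N ∈ 𝓝 w, ∀ u : ℕ → ℂ → ℂ, (∀ n, u n ∈ 𝓕) →
      ∃ φ : ℕ → ℕ, StrictMono φ ∧ HasNormalLimitOn (u ∘ φ) N :=
    fun w hw => let ⟨N, _, hN, hNf⟩ := h w hw; ⟨N, hN, hNf⟩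
  choose! Ns hNs hNsf using hlocal
  obtain ⟨t, htK, hKt⟩ := hK.elim_nhds_subcover (fun w => interior (Ns w))
    fun w hw => interior_mem_nhds.mpr (hNs w hw)
  obtain ⟨φ, hφ, hlim⟩ := t.exists_common_subsequence
    (P := fun w u => HasNormalLimitOn u (Ns w)) (fun _ _ _ hφ hu => hu.comp_strictMono hφ)
    (fun w hw => hNsf w (htK w hw)) f hf
  refine ⟨φ, hφ, fun z hz => ?_⟩
  obtain ⟨w, hw, hzw⟩ := mem_iUnion₂.mp (hKt hz)
  exact ⟨Ns w, mem_interior_iff_mem_nhds.mp hzw, hlim w hw⟩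

theorem eventually_forall_closedBall_le_norm_of_sphere {c z₀ : ℂ} {ρ : ℝ} (hρ : ρ ≠ 0)
    (hF : ∀ n, DifferentiableOn ℂ (F n) (closedBall z₀ ρ))
    (hc : ∀ n, ∀ z ∈ closedBall z₀ ρ, F n z ≠ c)
    (h : ∀ M, ∀ᶠ n in atTop, ∀ z ∈ sphere z₀ ρ, M ≤ ‖F n z‖) (M : ℝ) :
    ∀ᶠ n in atTop, ∀ z ∈ closedBall z₀ ρ, M ≤ ‖F n z‖ := by
  filter_upwards [h (M + 2 * ‖c‖)] with n hn z hz
  have hzc : M + ‖c‖ ≤ ‖F n z - c‖ :=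
    le_norm_of_forall_mem_sphere_le_norm (g := fun x => F n x - c) hρ ((hF n).sub_const c)
      (fun x hx => sub_ne_zero.mpr (hc n x hx))
      (fun w hw => by linarith [hn w hw, norm_sub_norm_le (F n w) c]) hz
  linarith [norm_sub_le (F n z) c]

theorem normalAt_center_of_normalAt_sphere {D : Set ℂ} {𝓕 : Set (ℂ → ℂ)}
    (hol : ∀ f ∈ 𝓕, DifferentiableOn ℂ f D) {z₀ a b : ℂ} {ρ : ℝ} (hρ : 0 < ρ)
    (hD : closedBall z₀ ρ ⊆ D)
    (homit : ∀ f ∈ 𝓕, (∀ z ∈ closedBall z₀ ρ, f z ≠ a) ∨ ∀ z ∈ closedBall z₀ ρ, f z ≠ b)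
    (hnormal : ∀ w ∈ sphere z₀ ρ, NormalAt D 𝓕 w) : NormalAt D 𝓕 z₀ := by
  refine ⟨ball z₀ ρ, ball_subset_closedBall.trans hD, ball_mem_nhds z₀ hρ, fun f hf => ?_⟩
  obtain ⟨φ₀, hφ₀, c, hc⟩ : ∃ φ : ℕ → ℕ, StrictMono φ ∧
      ∃ c, ∀ n, ∀ z ∈ closedBall z₀ ρ, f (φ n) z ≠ c := by
    obtain ⟨φ, hφ, hab⟩ := exists_strictMono_forall_or_forall fun n => homit _ (hf n)
    exact ⟨φ, hφ, hab.elim (⟨a, ·⟩) (⟨b, ·⟩)⟩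
  obtain ⟨φ₁, hφ₁, hlim⟩ :=
    (isCompact_sphere z₀ ρ).exists_strictMono_forall_nhds_hasNormalLimitOn hnormal (f ∘ φ₀)
      fun n => hf _
  refine ⟨φ₀ ∘ φ₁, hφ₀.comp hφ₁, ?_⟩
  have hFd : ∀ n, DifferentiableOn ℂ (f (φ₀ (φ₁ n))) (closedBall z₀ ρ) :=
    fun n => (hol _ (hf _)).mono hD
  rcases (isPreconnected_sphere (by simp) z₀ ρ).forall_nhds_infty_or_forall_nhds_tendsto hlim
    with hinf | hconv
  · refine Or.inr fun K hK _ M => ?_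
    have hball := eventually_forall_closedBall_le_norm_of_sphere hρ.ne' hFd
      (fun n => hc (φ₁ n)) ((isCompact_sphere z₀ ρ).eventually_forall_le_norm_of_forall_nhds hinf) M
    exact hball.mono fun n hn z hz => hn z (ball_subset_closedBall (hK hz))
  · have hcauchy := ((isCompact_sphere z₀ ρ).uniformCauchySeqOn_of_forall_nhds
      hconv).closedBall_of_sphere hρ.ne' hFd
    obtain ⟨g, hg⟩ := hcauchy.exists_tendstoUniformlyOn
    have hg' := hg.tendstoLocallyUniformlyOn.mono ball_subset_closedBall
    exact Or.inl ⟨g, hg'.differentiableOn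
      (.of_forall fun n => (hFd n).mono ball_subset_closedBall) isOpen_ball, hg'⟩

end NormalFamilies

theorem forall_ne_or_forall_ne_of_notMem_image_diff_singleton {α β : Type*} {f : α → β}
    {s : Set α} {x : α} {a b : β} (hab : a ≠ b) (ha : a ∉ f '' (s \ {x}))
    (hb : b ∉ f '' (s \ {x})) : (∀ z ∈ s, f z ≠ a) ∨ ∀ z ∈ s, f z ≠ b := by
  have omits {c : β} (hc : c ∉ f '' (s \ {x})) (hxc : f x ≠ c) : ∀ z ∈ s, f z ≠ c := by
    intro z hz hzc
    rcases eq_or_ne z x with rfl | hzx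
    · exact hxc hzc
    · exact hc ⟨z, ⟨hz, hzx⟩, hzc⟩
  rcases eq_or_ne (f x) a with hxa | hxa
  · exact Or.inr (omits hb (hxa ▸ hab))
  · exact Or.inl (omits ha hxa)

theorem exists_open_almost_onto_of_isolated_julia_point_general
    (D : Set ℂ) (hD : IsOpen D)
    (𝓕 : Set (ℂ → ℂ)) (hol : ∀ f ∈ 𝓕, DifferentiableOn ℂ f D)
    (z₀ : ℂ) (hz₀ : z₀ ∈ JuliaSet D 𝓕)
    (hiso : ∃ N ∈ 𝓝 z₀, N ∩ JuliaSet D 𝓕 = {z₀}) :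
    ∃ U : Set ℂ, U.Nonempty ∧ IsOpen U ∧ U ⊆ FatouSet D 𝓕 ∧
      (Set.univ \ ⋃ f ∈ 𝓕, f '' U).Subsingleton := by
  obtain ⟨hz₀D, hz₀F⟩ := hz₀
  obtain ⟨N, hN, hNJ⟩ := hiso
  obtain ⟨r, hr, hrN⟩ := nhds_basis_ball.mem_iff.mp (inter_mem hN (hD.mem_nhds hz₀D))
  set U := ball z₀ r \ {z₀}
  have hUF : U ⊆ FatouSet D 𝓕 := fun z ⟨hz, hzz₀⟩ => by
    by_contra hzF
    exact hzz₀ (hNJ ▸ ⟨(hrN hz).1, (hrN hz).2, hzF⟩ : z ∈ ({z₀} : Set ℂ))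
  have hdisc : closedBall z₀ (r / 2) ⊆ ball z₀ r := closedBall_subset_ball (half_lt_self hr)
  have hsphere : sphere z₀ (r / 2) ⊆ U := fun z hz =>
    ⟨hdisc (sphere_subset_closedBall hz), ne_of_mem_sphere hz (half_pos hr).ne'⟩
  refine ⟨U, (NormedSpace.sphere_nonempty.mpr (half_pos hr).le).mono hsphere,
    isOpen_ball.sdiff isClosed_singleton, hUF, ?_⟩
  rintro a ⟨-, ha⟩ b ⟨-, hb⟩
  by_contra hab
  have homit (f) (hf : f ∈ 𝓕) {c : ℂ} (hc : c ∉ ⋃ f ∈ 𝓕, f '' U) :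
      c ∉ f '' (closedBall z₀ (r / 2) \ {z₀}) :=
    fun h => hc (mem_biUnion hf (image_mono (sdiff_subset_sdiff_left hdisc) h))
  exact hz₀F ⟨hz₀D, normalAt_center_of_normalAt_sphere hol (half_pos hr)
    (hdisc.trans fun z hz => (hrN hz).2)
    (fun f hf => forall_ne_or_forall_ne_of_notMem_image_diff_singleton hab (homit f hf ha)
      (homit f hf hb))
    fun w hw => (hUF (hsphere hw)).2⟩

/-- If the Julia like set of a family `𝓕` of holomorphic functions on a
domain `D` has an isolated point, then there is a nonempty open set `U ⊆ F(𝓕)` such that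
`ℂ \ ⋃_{f ∈ 𝓕} f(U)` has at most one point. -/
theorem exists_open_almost_onto_of_isolated_julia_point
    (D : Set ℂ) (hD : IsOpen D) (hDconn : IsConnected D)
    (𝓕 : Set (ℂ → ℂ)) (hol : ∀ f ∈ 𝓕, DifferentiableOn ℂ f D)
    (z₀ : ℂ) (hz₀ : z₀ ∈ JuliaSet D 𝓕)
    (hiso : ∃ N ∈ 𝓝 z₀, N ∩ JuliaSet D 𝓕 = {z₀}) :
    ∃ U : Set ℂ, U.Nonempty ∧ IsOpen U ∧ U ⊆ FatouSet D 𝓕 ∧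
      (Set.univ \ ⋃ f ∈ 𝓕, f '' U).Subsingleton :=
  exists_open_almost_onto_of_isolated_julia_point_general D hD 𝓕 hol z₀ hz₀ hiso
end

section
/- Let D ⊆ ℂ be a simply connected domain, let D₁ be an open connected subset of D, and let U be a connected component of D \ cl(D₁), where cl(D₁) denotes the closure of D₁ in D. Then ∂U, the boundary of U relative to D, is connected. -/
open Filter Topology Set

/-!
Work in the subspace `D`, where `C = cl(D₁)` is closed and connected and `U` is a component of
`Cᶜ`. The sets `closure U` and `Uᶜ` are closed and preconnected (every other component of `Cᶜ`
has closure meeting `C`, so `Uᶜ` is `C` together with these closures), they cover `D`, and they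
meet exactly in `frontier U`. It remains to see that a simply connected, locally path-connected
normal space is unicoherent. If `A ∩ B` split into closed sets `P` and `Q`, an Urysohn function
`u` (`0` on `P`, `1` on `Q`) gives a circle-valued map equal to `exp (iπu)` on `A` and to
`exp (-iπu)` on `B`. It lifts to a real function `g`, and `g - πu` resp. `g + πu` is constant on
the preconnected set `A` resp. `B`, which forces `u` to be constant on `A ∩ B`.
-/

open Real

section Unicoherence

variable {X : Type*} [TopologicalSpace X]

theorem IsPreconnected.sub_eq_of_circleExp_eq {s : Set X} (hs : IsPreconnected s) {g h : X → ℝ}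
    (hg : ContinuousOn g s) (hh : ContinuousOn h s)
    (hgh : ∀ z ∈ s, Circle.exp (g z) = Circle.exp (h z)) {x y : X} (hx : x ∈ s)
    (hy : y ∈ s) :
    g x - h x = g y - h y := by
  have hmaps : MapsTo (fun z => g z - h z) s (AddSubgroup.zmultiples (2 * π)) := fun z hz => by
    obtain ⟨m, hm⟩ := Circle.exp_eq_exp.mp (hgh z hz)
    exact ⟨m, by simp only [zsmul_eq_mul, hm]; ring⟩
  exact hs.constant_of_mapsTo (isDiscrete_iff_discreteTopology.mpr
    (inferInstance : DiscreteTopology (AddSubgroup.zmultiples (2 * π)))) (hg.sub hh)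
    hmaps hx hy

theorem exists_circleExp_lift [SimplyConnectedSpace X] [LocallyPathConnectedSpace X]
    (f : C(X, Circle)) : ∃ g : C(X, ℝ), ∀ x, Circle.exp (g x) = f x := by
  obtain ⟨x₀⟩ := (inferInstance : Nonempty X)
  obtain ⟨e, he⟩ := Circle.exp_surjective (f x₀)
  obtain ⟨g, ⟨-, hg⟩, -⟩ :=
    Circle.isCoveringMap_exp.existsUnique_continuousMap_lifts f x₀ e he
  exact ⟨g, congrFun hg⟩

theorem eq_of_mem_inter_of_isPreconnected_of_union_eq_univ [SimplyConnectedSpace X]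
    [LocallyPathConnectedSpace X] {A B : Set X} (hA : IsClosed A) (hB : IsClosed B)
    (hA' : IsPreconnected A) (hB' : IsPreconnected B) (hAB : A ∪ B = univ) (u : C(X, ℝ))
    (hu : ∀ x ∈ A ∩ B, ∃ n : ℤ, u x = n) {p q : X} (hp : p ∈ A ∩ B)
    (hq : q ∈ A ∩ B) :
    u p = u q := by
  classical
  have hflip : ∀ x ∈ A ∩ B, Circle.exp (π * u x) = Circle.exp (-(π * u x)) := fun x hx => by
    obtain ⟨n, hn⟩ := hu x hx
    exact Circle.exp_eq_exp.mpr ⟨n, by rw [hn]; ring⟩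
  have hfrontier : frontier A ⊆ A ∩ B := fun x hx =>
    ⟨hA.frontier_subset hx,
      (hB.closure_subset_iff.mpr fun y hy => (hAB ▸ mem_univ y).resolve_left hy)
        (frontier_compl A ▸ hx).1⟩
  let f : C(X, Circle) :=
    ⟨fun x => if x ∈ A then Circle.exp (π * u x) else Circle.exp (-(π * u x)),
      Continuous.if (fun x hx => hflip x (hfrontier hx)) (by fun_prop) (by fun_prop)⟩
  obtain ⟨g, hg⟩ := exists_circleExp_lift f
  have hgA : ∀ x ∈ A, Circle.exp (g x) = Circle.exp (π * u x) := fun x hx => by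
    rw [hg]; exact if_pos hx
  have hgB : ∀ x ∈ B, Circle.exp (g x) = Circle.exp (-(π * u x)) := fun x hx => by
    by_cases hxA : x ∈ A
    · rw [hg, ← hflip x ⟨hxA, hx⟩]; exact if_pos hxA
    · rw [hg]; exact if_neg hxA
  have eA := hA'.sub_eq_of_circleExp_eq g.continuous.continuousOn (by fun_prop) hgA hp.1 hq.1
  have eB := hB'.sub_eq_of_circleExp_eq g.continuous.continuousOn (by fun_prop) hgB hp.2 hq.2
  exact mul_left_cancel₀ Real.pi_ne_zero (by linarith)

theorem isPreconnected_inter_of_union_eq_univ [NormalSpace X] [SimplyConnectedSpace X]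
    [LocallyPathConnectedSpace X] {A B : Set X} (hA : IsClosed A) (hB : IsClosed B)
    (hA' : IsPreconnected A) (hB' : IsPreconnected B) (hAB : A ∪ B = univ) :
    IsPreconnected (A ∩ B) := by
  rw [isPreconnected_iff_subset_of_fully_disjoint_closed (hA.inter hB)]
  intro P Q hP hQ hPQ hdisj
  by_contra! h
  obtain ⟨p, hp, hpQ⟩ := not_subset.mp h.2
  obtain ⟨q, hq, hqP⟩ := not_subset.mp h.1
  obtain ⟨u, hu0, hu1, -⟩ := exists_continuous_zero_one_of_isClosed hP hQ hdisj
  have hint : ∀ x ∈ A ∩ B, ∃ n : ℤ, u x = n := fun x hx =>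
    (hPQ hx).elim (fun h => ⟨0, by simp [hu0 h]⟩) (fun h => ⟨1, by simp [hu1 h]⟩)
  have := eq_of_mem_inter_of_isPreconnected_of_union_eq_univ hA hB hA' hB' hAB u hint hp hq
  rw [hu0 ((hPQ hp).resolve_right hpQ), hu1 ((hPQ hq).resolve_left hqP)] at this
  exact zero_ne_one this

end Unicoherence

section Components

variable {Y : Type*} [TopologicalSpace Y]

theorem closure_connectedComponentIn_inter_subset {V : Set Y} {x : Y} (hx : x ∈ V) :
    closure (connectedComponentIn V x) ∩ V ⊆ connectedComponentIn V x :=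
  (isPreconnected_connectedComponentIn.subset_closure
      (subset_inter subset_closure (connectedComponentIn_subset V x)) inter_subset_left)
    |>.subset_connectedComponentIn ⟨subset_closure (mem_connectedComponentIn hx), hx⟩
      inter_subset_right

theorem closure_connectedComponentIn_compl_subset (C : Set Y) (x : Y) :
    closure (connectedComponentIn Cᶜ x) ⊆ connectedComponentIn Cᶜ x ∪ C := by
  intro z hz
  by_cases hxC : x ∈ C
  · simp [connectedComponentIn_eq_empty (show x ∉ Cᶜ from not_not_intro hxC)] at hz
  by_cases hzC : z ∈ C
  · exact Or.inr hzC
  · exact Or.inl (closure_connectedComponentIn_inter_subset hxC ⟨hz, hzC⟩)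

variable [LocallyConnectedSpace Y]

theorem closure_connectedComponentIn_compl_inter_nonempty [PreconnectedSpace Y] {C : Set Y}
    (hC : IsClosed C) (hCne : C.Nonempty) {x : Y} (hx : x ∉ C) :
    (closure (connectedComponentIn Cᶜ x) ∩ C).Nonempty := by
  set U := connectedComponentIn Cᶜ x
  by_contra! h
  have hclosed : closure U ⊆ U := fun z hz =>
    (closure_connectedComponentIn_compl_subset C x hz).resolve_right
      fun hzC => (h.subset ⟨hz, hzC⟩ : z ∈ (∅ : Set Y))
  have hU : U = univ := IsClopen.eq_univ ⟨closure_subset_iff_isClosed.mp hclosed,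
    hC.isOpen_compl.connectedComponentIn⟩ ⟨x, mem_connectedComponentIn hx⟩
  obtain ⟨c, hc⟩ := hCne
  exact (connectedComponentIn_subset _ _ (hU ▸ mem_univ c) : c ∈ Cᶜ) hc

theorem isPreconnected_compl_connectedComponentIn_compl [PreconnectedSpace Y] {C : Set Y}
    (hC : IsClosed C) (hCc : IsConnected C) (x : Y) :
    IsPreconnected (connectedComponentIn Cᶜ x)ᶜ := by
  set U := connectedComponentIn Cᶜ x
  obtain ⟨c, hc⟩ := hCc.nonempty
  have hCU : C ⊆ Uᶜ := fun z hz hzU => connectedComponentIn_subset _ _ hzU hz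
  refine isPreconnected_of_forall c fun y hy => ?_
  by_cases hyC : y ∈ C
  · exact ⟨C, hCU, hc, hyC, hCc.isPreconnected⟩
  set W := connectedComponentIn Cᶜ y
  have hWU : closure W ⊆ Uᶜ := fun z hz hzU => by
    rcases closure_connectedComponentIn_compl_subset C y hz with hzW | hzC
    · refine hy (show y ∈ connectedComponentIn Cᶜ x from ?_)
      rw [connectedComponentIn_eq hzU, ← connectedComponentIn_eq hzW]
      exact mem_connectedComponentIn hyC
    · exact hCU hzC hzU
  refine ⟨C ∪ closure W, union_subset hCU hWU, Or.inl hc,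
    Or.inr (subset_closure (mem_connectedComponentIn hyC)), ?_⟩
  exact hCc.isPreconnected.union'
    (inter_comm _ C ▸ closure_connectedComponentIn_compl_inter_nonempty hC hCc.nonempty hyC)
    isPreconnected_connectedComponentIn.closure

end Components

theorem isPreconnected_frontier_connectedComponentIn_compl {Y : Type*} [TopologicalSpace Y]
    [NormalSpace Y] [SimplyConnectedSpace Y] [LocallyPathConnectedSpace Y] {C : Set Y}
    (hC : IsClosed C) (hCc : IsConnected C) (x : Y) :
    IsPreconnected (frontier (connectedComponentIn Cᶜ x)) := by
  have hU : IsOpen (connectedComponentIn Cᶜ x) := hC.isOpen_compl.connectedComponentIn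
  rw [frontier_eq_closure_inter_closure, hU.isClosed_compl.closure_eq]
  exact isPreconnected_inter_of_union_eq_univ isClosed_closure hU.isClosed_compl
    isPreconnected_connectedComponentIn.closure
    (isPreconnected_compl_connectedComponentIn_compl hC hCc x)
    (eq_univ_of_subset (union_subset_union_left _ subset_closure) (union_compl_self _))

section Subtype

variable {X : Type*} [TopologicalSpace X] {D : Set X}

theorem isPreconnected_preimage_val_iff {s : Set X} (hs : s ⊆ D) :
    IsPreconnected ((↑) ⁻¹' s : Set D) ↔ IsPreconnected s := by
  rw [← IsInducing.subtypeVal.isPreconnected_image, Subtype.image_preimage_coe,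
    inter_eq_right.mpr hs]

theorem connectedComponentIn_eq_image_val {V : Set X} (hVD : V ⊆ D) (x : D) :
    connectedComponentIn V x = (↑) '' connectedComponentIn ((↑) ⁻¹' V : Set D) x := by
  by_cases hx : (x : X) ∈ V
  swap
  · rw [connectedComponentIn_eq_empty hx,
      connectedComponentIn_eq_empty (show x ∉ ((↑) ⁻¹' V : Set D) from hx), image_empty]
  refine subset_antisymm (fun z hz => ?_) ?_
  · have hzD : z ∈ D := hVD (connectedComponentIn_subset V x hz)
    have hpre : IsPreconnected ((↑) ⁻¹' connectedComponentIn V x : Set D) :=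
      (isPreconnected_preimage_val_iff ((connectedComponentIn_subset V x).trans hVD)).mpr
        isPreconnected_connectedComponentIn
    refine ⟨⟨z, hzD⟩, hpre.subset_connectedComponentIn ?_ ?_ hz, rfl⟩
    · exact mem_connectedComponentIn hx
    · exact fun w hw => connectedComponentIn_subset V x hw
  · simpa [Subtype.image_preimage_coe, inter_eq_right.mpr hVD] using
      continuous_subtype_val.continuousOn.image_connectedComponentIn_subset
        (show x ∈ ((↑) ⁻¹' V : Set D) from hx)

theorem IsOpen.inter_frontier_image_val (hD : IsOpen D) (s : Set D) :
    D ∩ frontier ((↑) '' s) = (↑) '' frontier s := by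
  rw [← Subtype.image_preimage_coe,
    hD.isOpenMap_subtype_val.preimage_frontier_eq_frontier_preimage continuous_subtype_val,
    Subtype.val_injective.preimage_image]

end Subtype

theorem relBoundary_component_connected_general
    (D : Set ℂ) (hD : IsOpen D)
    (hsc : SimplyConnectedSpace D)
    (D₁ : Set ℂ) (h1D : D₁ ⊆ D) (h1c : IsConnected D₁)
    (U : Set ℂ) (x : ℂ) (hx : x ∈ D \ relClosure D D₁)
    (hU : U = connectedComponentIn (D \ relClosure D D₁) x) :
    IsPreconnected (relBoundary D U) := by
  have := hD.locallyPathConnectedSpace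
  set C : Set D := (↑) ⁻¹' closure D₁
  have hC : IsClosed C := isClosed_closure.preimage continuous_subtype_val
  have hCc : IsConnected C := by
    obtain ⟨y, hy⟩ := h1c.nonempty
    refine ⟨⟨⟨y, h1D hy⟩, subset_closure hy⟩, ?_⟩
    have hCeq : C = closure ((↑) ⁻¹' D₁) := by
      rw [IsEmbedding.subtypeVal.closure_eq_preimage_closure_image, Subtype.image_preimage_coe,
        inter_eq_right.mpr h1D]
    exact hCeq ▸ ((isPreconnected_preimage_val_iff h1D).mpr h1c.isPreconnected).closure
  have hV : ((↑) ⁻¹' (D \ relClosure D D₁) : Set D) = Cᶜ := by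
    ext z; simp [relClosure, C]
  rw [hU, relBoundary, connectedComponentIn_eq_image_val sdiff_subset ⟨x, hx.1⟩, hV,
    hD.inter_frontier_image_val]
  exact (isPreconnected_frontier_connectedComponentIn_compl hC hCc _).image _
    continuous_subtype_val.continuousOn

/-- Let `D ⊆ ℂ` be a simply connected domain, `D₁` an open connected
subset of `D`, and `U` a connected component of `D \ cl(D₁)` (closure in `D`). Then the
boundary of `U` relative to `D` is connected. -/
theorem relBoundary_component_connected
    (D : Set ℂ) (hD : IsOpen D) (hDconn : IsConnected D)
    (hsc : SimplyConnectedSpace D)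
    (D₁ : Set ℂ) (h1D : D₁ ⊆ D) (h1o : IsOpen D₁) (h1c : IsConnected D₁)
    (U : Set ℂ) (x : ℂ) (hx : x ∈ D \ relClosure D D₁)
    (hU : U = connectedComponentIn (D \ relClosure D D₁) x) :
    IsPreconnected (relBoundary D U) :=
  relBoundary_component_connected_general D hD hsc D₁ h1D h1c U x hx hU
end

section
/- Let 𝓕 be a family of holomorphic functions on a domain D ⊆ ℂ and let V be a connected component of the Fatou like set F(𝓕). If V ∩ I(𝓕) ≠ ∅, then V ⊆ I(𝓕). -/
open Filter Topology Set

/-! Normality at a point makes escape locally constant near it: along an injective sequence of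
`𝓕`, a subsequence bounded at one point of a normality neighbourhood can neither converge at an
escaping point of it nor diverge locally uniformly. Being locally constant, escape is constant on
each connected component of the Fatou set. -/

lemma NormalAt.eventually_mem_escapingSet_iff {D : Set ℂ} {𝓕 : Set (ℂ → ℂ)} {z : ℂ}
    (h : NormalAt D 𝓕 z) : ∀ᶠ y in 𝓝 z, (z ∈ EscapingSet D 𝓕 ↔ y ∈ EscapingSet D 𝓕) := by
  obtain ⟨N, hND, hN, hnorm⟩ := h
  have spread : ∀ w ∈ N, w ∈ EscapingSet D 𝓕 → ∀ y ∈ N, y ∈ EscapingSet D 𝓕 := by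
    intro w hw hwI y hy
    refine ⟨hND hy, fun f hf hinj => ?_⟩
    by_contra hdiv
    simp only [tendsto_atTop, not_forall, not_eventually, not_le] at hdiv
    obtain ⟨M, hM⟩ := hdiv
    obtain ⟨σ, hσ, hσM⟩ := extraction_of_frequently_atTop hM
    obtain ⟨φ, hφ, hlim | hinf⟩ := hnorm (fun n => f (σ n)) fun n => hf _
    · obtain ⟨g, -, hconv⟩ := hlim
      have hesc := hwI.2 (fun n => f (σ (φ n))) (fun n => hf _) (hinj.comp (hσ.comp hφ).injective)
      exact not_tendsto_atTop_of_tendsto_nhds (hconv.tendsto_at hw).norm hesc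
    · obtain ⟨n, hn⟩ := (hinf {y} (singleton_subset_iff.mpr hy) isCompact_singleton M).exists
      exact (hσM (φ n)).not_ge (hn y rfl)
  filter_upwards [hN] with y hy
  exact ⟨fun hz => spread z (mem_of_mem_nhds hN) hz y hy,
    fun hyI => spread y hy hyI z (mem_of_mem_nhds hN)⟩

theorem fatou_component_subset_escaping_general
    (D : Set ℂ)
    (𝓕 : Set (ℂ → ℂ))
    (V : Set ℂ) (x : ℂ)
    (hV : V = connectedComponentIn (FatouSet D 𝓕) x)
    (hne : (V ∩ EscapingSet D 𝓕).Nonempty) :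
    V ⊆ EscapingSet D 𝓕 := by
  obtain ⟨w, hwV, hwI⟩ := hne
  have hVF : V ⊆ FatouSet D 𝓕 := hV ▸ connectedComponentIn_subset _ _
  have hVpre : IsPreconnected V := hV ▸ isPreconnected_connectedComponentIn
  intro z hz
  refine (hVpre.induction₂ (fun a b => a ∈ EscapingSet D 𝓕 ↔ b ∈ EscapingSet D 𝓕)
    (fun a ha => ?_) (fun _ _ _ _ _ _ => Iff.trans) (fun _ _ _ _ => Iff.symm) hwV hz).1 hwI
  exact nhdsWithin_le_nhds (hVF ha).2.eventually_mem_escapingSet_iff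

/-- If a connected component `V` of the Fatou like set meets the
escaping like set `I(𝓕)`, then `V ⊆ I(𝓕)`. -/
theorem fatou_component_subset_escaping
    (D : Set ℂ) (hD : IsOpen D) (hDconn : IsConnected D)
    (𝓕 : Set (ℂ → ℂ)) (hol : ∀ f ∈ 𝓕, DifferentiableOn ℂ f D)
    (V : Set ℂ) (x : ℂ) (hx : x ∈ FatouSet D 𝓕)
    (hV : V = connectedComponentIn (FatouSet D 𝓕) x)
    (hne : (V ∩ EscapingSet D 𝓕).Nonempty) :
    V ⊆ EscapingSet D 𝓕 :=
  fatou_component_subset_escaping_general D 𝓕 V x hV hne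
end

section
/- Let 𝓕 be a family of holomorphic functions on a domain D ⊆ ℂ and let V be a connected component of the Fatou like set F(𝓕). If V ∩ U(𝓕) ≠ ∅, then V ⊆ U(𝓕). -/
open Filter Topology Set

/-- Auxiliary: the Fatou set is open. -/
lemma fatouSet_isOpen (D : Set ℂ) (𝓕 : Set (ℂ → ℂ)) : IsOpen (FatouSet D 𝓕) := by
  rw [isOpen_iff_mem_nhds]
  rintro z ⟨hzD, N, hND, hNz, hprop⟩
  filter_upwards [interior_mem_nhds.2 hNz] with w hw
  exact ⟨hND (interior_subset hw), N, hND,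
    mem_nhds_iff.2 ⟨interior N, interior_subset, isOpen_interior, hw⟩, hprop⟩

/-- Auxiliary: if a normality neighborhood contains a point of the generalized escaping
set, then the whole neighborhood is contained in it. -/
lemma key_lemma (D : Set ℂ) (𝓕 : Set (ℂ → ℂ)) (N : Set ℂ) (hND : N ⊆ D)
    (hprop : ∀ f : ℕ → ℂ → ℂ, (∀ n, f n ∈ 𝓕) →
      ∃ φ : ℕ → ℕ, StrictMono φ ∧
        ((∃ g : ℂ → ℂ, DifferentiableOn ℂ g N ∧
            TendstoLocallyUniformlyOn (fun n => f (φ n)) g Filter.atTop N) ∨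
          TendstoLocallyUniformlyOnInfty (fun n => f (φ n)) N))
    (w : ℂ) (hw : w ∈ N) (hwU : w ∈ GenEscapingSet D 𝓕) :
    N ⊆ GenEscapingSet D 𝓕 := by
  obtain ⟨-, f, hf, htend⟩ := hwU
  obtain ⟨φ, hφ, hcase⟩ := hprop f hf
  have htend' : Filter.Tendsto (fun n => ‖f (φ n) w‖) Filter.atTop Filter.atTop :=
    htend.comp hφ.tendsto_atTop
  rcases hcase with ⟨g, hg, hconv⟩ | hinf
  · exact absurd htend'
      (((hconv.tendsto_at hw).norm).not_tendsto (disjoint_nhds_atTop _))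
  · intro z hz
    refine ⟨hND hz, fun n => f (φ n), fun n => hf _, Filter.tendsto_atTop.2 fun M => ?_⟩
    filter_upwards [hinf {z} (Set.singleton_subset_iff.2 hz) isCompact_singleton M]
      with n h using h z rfl

/-- If a connected component `V` of the Fatou like set meets the
generalized escaping like set `U(𝓕)`, then `V ⊆ U(𝓕)`. -/
theorem fatou_component_subset_genEscaping
    (D : Set ℂ) (hD : IsOpen D) (hDconn : IsConnected D)
    (𝓕 : Set (ℂ → ℂ)) (hol : ∀ f ∈ 𝓕, DifferentiableOn ℂ f D)
    (V : Set ℂ) (x : ℂ) (hx : x ∈ FatouSet D 𝓕)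
    (hV : V = connectedComponentIn (FatouSet D 𝓕) x)
    (hne : (V ∩ GenEscapingSet D 𝓕).Nonempty) :
    V ⊆ GenEscapingSet D 𝓕 := by
  set U := GenEscapingSet D 𝓕 with hU
  set W := V ∩ U with hW
  have hVopen : IsOpen V := hV ▸ (fatouSet_isOpen D 𝓕).connectedComponentIn
  have hVF : V ⊆ FatouSet D 𝓕 := hV ▸ connectedComponentIn_subset _ _
  -- closure part: points of V in the closure of U are in U
  have hcl : V ∩ closure U ⊆ U := by
    rintro z ⟨hzV, hzcl⟩
    obtain ⟨hzD, N, hND, hNz, hprop⟩ := hVF hzV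
    obtain ⟨w, hwN, hwU⟩ := mem_closure_iff_nhds.1 hzcl N hNz
    exact key_lemma D 𝓕 N hND hprop w hwN hwU (mem_of_mem_nhds hNz)
  -- openness of W
  have hWopen : IsOpen W := by
    rw [isOpen_iff_mem_nhds]
    rintro z ⟨hzV, hzU⟩
    obtain ⟨hzD, N, hND, hNz, hprop⟩ := hVF hzV
    have hNU : N ⊆ U := key_lemma D 𝓕 N hND hprop z (mem_of_mem_nhds hNz) hzU
    exact Filter.inter_mem (hVopen.mem_nhds hzV) (Filter.mem_of_superset hNz hNU)
  have hpre : IsPreconnected V := hV ▸ (isPreconnected_connectedComponentIn)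
  intro z hzV
  by_contra hzU
  have hzW : z ∈ (closure W)ᶜ := by
    intro hzcl
    exact hzU (hcl ⟨hzV, closure_mono Set.inter_subset_right hzcl⟩)
  have hsub : V ⊆ W ∪ (closure W)ᶜ := by
    intro y hyV
    by_cases hy : y ∈ closure W
    · exact Or.inl ⟨hyV, hcl ⟨hyV, closure_mono Set.inter_subset_right hy⟩⟩
    · exact Or.inr hy
  obtain ⟨p, -, hpW, hpWc⟩ := hpre W (closure W)ᶜ hWopen isClosed_closure.isOpen_compl
    hsub ⟨hne.choose, hne.choose_spec.1, hne.choose_spec⟩ ⟨z, hzV, hzW⟩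
  exact hpWc (subset_closure hpW)
end

section
/- Let 𝓕 be a family of entire functions (with D = ℂ) such that f ∘ g = g ∘ f for all f, g ∈ 𝓕. Then the escaping like set I(𝓕) and the generalized escaping like set U(𝓕) are backward invariant: for every g ∈ 𝓕, g⁻¹(I(𝓕)) ⊆ I(𝓕) and g⁻¹(U(𝓕)) ⊆ U(𝓕). -/
open Filter Topology Set

/-! Commuting gives `f_n (g z) = g (f_n z)`, and a continuous `g` maps bounded sets to bounded
sets, so `g (f_n z) → ∞` forces `f_n z → ∞`. -/

theorem Continuous.tendsto_norm_atTop_of_tendsto_norm_comp {α E F : Type*}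
    [NormedAddCommGroup E] [ProperSpace E] [SeminormedAddCommGroup F] {f : E → F}
    (hf : Continuous f) {l : Filter α} {w : α → E}
    (h : Tendsto (fun a => ‖f (w a)‖) l atTop) : Tendsto (fun a => ‖w a‖) l atTop := by
  rw [tendsto_norm_atTop_iff_cobounded, Metric.cobounded_eq_cocompact]
  rw [tendsto_norm_atTop_iff_cobounded] at h
  exact (h.mono_right Metric.cobounded_le_cocompact).of_tendsto_comp (comap_cocompact_le hf)

theorem tendsto_norm_apply_of_tendsto_norm_apply_comp_of_commute {ι E : Type*}
    [NormedAddCommGroup E] [ProperSpace E] {l : Filter ι} {g : E → E} (hg : Continuous g)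
    {u : ι → E → E} (hu : ∀ i, u i ∘ g = g ∘ u i) {z : E}
    (h : Tendsto (fun i => ‖u i (g z)‖) l atTop) : Tendsto (fun i => ‖u i z‖) l atTop := by
  have hcomm (i : ι) : g (u i z) = u i (g z) := (congrFun (hu i) z).symm
  exact hg.tendsto_norm_atTop_of_tendsto_norm_comp (by simpa only [hcomm] using h)

/-- If `𝓕` is a family of entire functions with `f ∘ g = g ∘ f` for all
`f, g ∈ 𝓕`, then `I(𝓕)` and `U(𝓕)` are backward invariant. -/
theorem escaping_genEscaping_backward_invariant_of_commuting (𝓕 : Set (ℂ → ℂ))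
    (hent : ∀ f ∈ 𝓕, Differentiable ℂ f)
    (hcomm : ∀ f ∈ 𝓕, ∀ g ∈ 𝓕, f ∘ g = g ∘ f) :
    ∀ g ∈ 𝓕, g ⁻¹' EscapingSet Set.univ 𝓕 ⊆ EscapingSet Set.univ 𝓕 ∧
      g ⁻¹' GenEscapingSet Set.univ 𝓕 ⊆ GenEscapingSet Set.univ 𝓕 := by
  intro g hg
  have escape_of_image {u : ℕ → ℂ → ℂ} (hu : ∀ n, u n ∈ 𝓕) {z : ℂ}
      (h : Tendsto (fun n => ‖u n (g z)‖) atTop atTop) : Tendsto (fun n => ‖u n z‖) atTop atTop :=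
    tendsto_norm_apply_of_tendsto_norm_apply_comp_of_commute (hent g hg).continuous
      (fun n => hcomm (u n) (hu n) g hg) h
  constructor
  · rintro z ⟨-, hescape⟩
    exact ⟨trivial, fun u hu hinj => escape_of_image hu (hescape u hu hinj)⟩
  · rintro z ⟨-, u, hu, hescape⟩
    exact ⟨trivial, u, hu, escape_of_image hu hescape⟩
end

section
/- Let 𝓕 be a family of holomorphic functions on a domain D ⊆ ℂ. If the Julia like set J(𝓕) has an isolated point, then the generalized escaping like set U(𝓕) is nonempty. -/
open Filter Topology Set

/-- `Good F N`: the alternative appearing in `NormalAt`. -/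
private def Good (F : ℕ → ℂ → ℂ) (N : Set ℂ) : Prop :=
  (∃ g : ℂ → ℂ, DifferentiableOn ℂ g N ∧
      TendstoLocallyUniformlyOn F g Filter.atTop N) ∨
    TendstoLocallyUniformlyOnInfty F N

private lemma tlu_subseq {F : ℕ → ℂ → ℂ} {g : ℂ → ℂ} {s : Set ℂ} {ψ : ℕ → ℕ}
    (hψ : StrictMono ψ) (h : TendstoLocallyUniformlyOn F g Filter.atTop s) :
    TendstoLocallyUniformlyOn (fun n => F (ψ n)) g Filter.atTop s := by
  intro u hu x hx
  obtain ⟨t, ht, h2⟩ := h u hu x hx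
  exact ⟨t, ht, hψ.tendsto_atTop.eventually h2⟩

private lemma tluInf_subseq {F : ℕ → ℂ → ℂ} {s : Set ℂ} {ψ : ℕ → ℕ}
    (hψ : StrictMono ψ) (h : TendstoLocallyUniformlyOnInfty F s) :
    TendstoLocallyUniformlyOnInfty (fun n => F (ψ n)) s :=
  fun K hK hKc M => hψ.tendsto_atTop.eventually (h K hK hKc M)

private lemma good_subseq {F : ℕ → ℂ → ℂ} {N : Set ℂ} {ψ : ℕ → ℕ}
    (hψ : StrictMono ψ) (h : Good F N) : Good (fun n => F (ψ n)) N := by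
  rcases h with ⟨g, hg, hgc⟩ | h
  · exact Or.inl ⟨g, hg, tlu_subseq hψ hgc⟩
  · exact Or.inr (tluInf_subseq hψ h)

/-- Iterated subsequence extraction over a finite list of sets. -/
private lemma extract (𝓕 : Set (ℂ → ℂ)) (l : List (Set ℂ))
    (hl : ∀ N ∈ l, ∀ h : ℕ → ℂ → ℂ, (∀ n, h n ∈ 𝓕) →
      ∃ φ : ℕ → ℕ, StrictMono φ ∧ Good (fun n => h (φ n)) N) :
    ∀ f : ℕ → ℂ → ℂ, (∀ n, f n ∈ 𝓕) →
      ∃ φ : ℕ → ℕ, StrictMono φ ∧ ∀ N ∈ l, Good (fun n => f (φ n)) N := by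
  induction l with
  | nil => exact fun f _ => ⟨id, strictMono_id, by simp⟩
  | cons N l ih =>
    intro f hf
    obtain ⟨φ₁, hφ₁, hg⟩ := hl N (by simp) f hf
    obtain ⟨φ₂, hφ₂, hrest⟩ := ih (fun M hM => hl M (by simp [hM]))
      (fun n => f (φ₁ n)) (fun n => hf _)
    refine ⟨φ₁ ∘ φ₂, hφ₁.comp hφ₂, ?_⟩
    intro M hM
    rcases List.mem_cons.mp hM with rfl | hM
    · exact good_subseq (F := fun n => f (φ₁ n)) hφ₂ hg
    · exact hrest M hM

/-- If the Julia like set of a family `𝓕` of holomorphic functions on a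
domain `D` has an isolated point, then the generalized escaping like set `U(𝓕)` is
nonempty. -/
theorem genEscaping_nonempty_of_isolated_julia_point
    (D : Set ℂ) (hD : IsOpen D) (hDconn : IsConnected D)
    (𝓕 : Set (ℂ → ℂ)) (hol : ∀ f ∈ 𝓕, DifferentiableOn ℂ f D)
    (z₀ : ℂ) (hz₀ : z₀ ∈ JuliaSet D 𝓕)
    (hiso : ∃ N ∈ 𝓝 z₀, N ∩ JuliaSet D 𝓕 = {z₀}) :
    (GenEscapingSet D 𝓕).Nonempty := by
  obtain ⟨hz₀D, hz₀F⟩ := hz₀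
  have hnot : ¬ NormalAt D 𝓕 z₀ := fun h => hz₀F ⟨hz₀D, h⟩
  obtain ⟨N₀, hN₀, hN₀J⟩ := hiso
  obtain ⟨ε, hε, hball⟩ : ∃ ε, 0 < ε ∧ Metric.closedBall z₀ ε ⊆ D ∩ N₀ :=
    Metric.nhds_basis_closedBall.mem_iff.mp (Filter.inter_mem (hD.mem_nhds hz₀D) hN₀)
  have hballD : Metric.closedBall z₀ ε ⊆ D := fun z hz => (hball hz).1
  have hballsubD : Metric.ball z₀ ε ⊆ D :=
    fun z hz => hballD (Metric.ball_subset_closedBall hz)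
  have hballnhds : Metric.ball z₀ ε ∈ 𝓝 z₀ := Metric.ball_mem_nhds _ hε
  -- a bad sequence on the ball
  have hbad : ∃ f : ℕ → ℂ → ℂ, (∀ n, f n ∈ 𝓕) ∧
      ∀ φ : ℕ → ℕ, StrictMono φ → ¬ Good (fun n => f (φ n)) (Metric.ball z₀ ε) := by
    by_contra hcon
    push_neg at hcon
    refine hnot ⟨Metric.ball z₀ ε, hballsubD, hballnhds, ?_⟩
    intro f hf
    obtain ⟨φ, hφ, hgood⟩ := hcon f hf
    exact ⟨φ, hφ, hgood⟩
  obtain ⟨f, hf𝓕, hfbad⟩ := hbad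
  -- normality data at each sphere point
  have hnormal : ∀ w : Metric.sphere z₀ ε, ∃ N : Set ℂ, ∃ r : ℝ, 0 < r ∧
      Metric.closedBall (↑w) r ⊆ N ∧ N ⊆ D ∧ (↑w : ℂ) ∈ N ∧
      ∀ h : ℕ → ℂ → ℂ, (∀ n, h n ∈ 𝓕) →
        ∃ φ : ℕ → ℕ, StrictMono φ ∧ Good (fun n => h (φ n)) N := by
    rintro ⟨w, hw⟩
    have hwcb : w ∈ Metric.closedBall z₀ ε := Metric.sphere_subset_closedBall hw
    have hwD : w ∈ D := hballD hwcb
    have hwz : w ≠ z₀ := by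
      intro h
      rw [Metric.mem_sphere, h, dist_self] at hw
      exact hε.ne hw
    have hwF : w ∈ FatouSet D 𝓕 := by
      by_contra hc
      have hmem : w ∈ N₀ ∩ JuliaSet D 𝓕 := ⟨(hball hwcb).2, hwD, hc⟩
      rw [hN₀J] at hmem
      exact hwz hmem
    obtain ⟨-, N, hND, hNnh, hNext⟩ := hwF
    obtain ⟨r, hr, hrN⟩ := Metric.nhds_basis_closedBall.mem_iff.mp hNnh
    refine ⟨N, r, hr, hrN, hND, mem_of_mem_nhds hNnh, ?_⟩
    intro h hh
    obtain ⟨φ, hφ, hgood⟩ := hNext h hh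
    exact ⟨φ, hφ, hgood⟩
  choose Nw rw' hrpos hrsub hND hwN hNext using hnormal
  -- finite subcover of the sphere
  have hS : IsCompact (Metric.sphere z₀ ε) := isCompact_sphere _ _
  obtain ⟨t, ht⟩ := hS.elim_finite_subcover
    (fun w : Metric.sphere z₀ ε => Metric.ball (↑w) (rw' w))
    (fun w => Metric.isOpen_ball)
    (fun x hx => Set.mem_iUnion.2 ⟨⟨x, hx⟩, Metric.mem_ball_self (hrpos _)⟩)
  -- extract a subsequence good on all the Nw, w ∈ t
  obtain ⟨φ, hφ, hgoodall⟩ := extract 𝓕 (t.toList.map Nw) (by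
    intro N hN h hh
    simp only [List.mem_map, Finset.mem_toList] at hN
    obtain ⟨w, hw, rfl⟩ := hN
    exact hNext w h hh) f hf𝓕
  have hgood : ∀ w ∈ t, Good (fun n => f (φ n)) (Nw w) := fun w hw =>
    hgoodall _ (List.mem_map.2 ⟨w, Finset.mem_toList.2 hw, rfl⟩)
  by_cases hcase : ∃ w ∈ t, TendstoLocallyUniformlyOnInfty (fun n => f (φ n)) (Nw w)
  · -- some group tends to infinity: its center escapes
    obtain ⟨w, hwt, hinf⟩ := hcase
    refine ⟨↑w, hND w (hwN w), fun n => f (φ n), fun n => hf𝓕 _, ?_⟩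
    rw [Filter.tendsto_atTop]
    intro M
    have := hinf {↑w} (Set.singleton_subset_iff.2 (hwN w)) isCompact_singleton M
    exact this.mono fun n hn => hn _ rfl
  · -- all groups converge to holomorphic functions: contradiction via max principle
    push_neg at hcase
    exfalso
    have hhol : ∀ w ∈ t, ∃ g : ℂ → ℂ,
        TendstoLocallyUniformlyOn (fun n => f (φ n)) g Filter.atTop (Nw w) := by
      intro w hw
      rcases hgood w hw with ⟨g, _, hg⟩ | hinf
      · exact ⟨g, hg⟩
      · exact absurd hinf (hcase w hw)
    choose g hg using hhol
    have hK : ∀ w ∈ t, UniformCauchySeqOn (fun n => f (φ n)) Filter.atTop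
        (Metric.sphere z₀ ε ∩ Metric.closedBall (↑w) (rw' w)) := by
      intro w hw
      have hc : IsCompact (Metric.sphere z₀ ε ∩ Metric.closedBall (↑w) (rw' w)) :=
        hS.inter_right Metric.isClosed_closedBall
      have hsub : Metric.sphere z₀ ε ∩ Metric.closedBall (↑w) (rw' w) ⊆ Nw w :=
        fun z hz => hrsub w hz.2
      exact ((tendstoLocallyUniformlyOn_iff_tendstoUniformlyOn_of_compact hc).mp
        ((hg w hw).mono hsub)).uniformCauchySeqOn
    have hCauchyS : UniformCauchySeqOn (fun n => f (φ n)) Filter.atTop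
        (Metric.sphere z₀ ε) := by
      rw [Metric.uniformCauchySeqOn_iff]
      intro δ hδ
      have h1 : ∀ w ∈ t, ∃ Nn : ℕ, ∀ m ≥ Nn, ∀ n ≥ Nn,
          ∀ x ∈ Metric.sphere z₀ ε ∩ Metric.closedBall (↑w) (rw' w),
            dist (f (φ m) x) (f (φ n) x) < δ :=
        fun w hw => Metric.uniformCauchySeqOn_iff.mp (hK w hw) δ hδ
      choose Nn hNn using h1
      refine ⟨t.attach.sup (fun w => Nn w.1 w.2), fun m hm n hn x hx => ?_⟩
      obtain ⟨w, hwt, hxw⟩ := Set.mem_iUnion₂.mp (ht hx)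
      have hle : Nn w hwt ≤ t.attach.sup (fun w => Nn w.1 w.2) :=
        Finset.le_sup (f := fun w => Nn w.1 w.2) (Finset.mem_attach t ⟨w, hwt⟩)
      exact hNn w hwt m (le_trans hle hm) n (le_trans hle hn) x
        ⟨hx, Metric.ball_subset_closedBall hxw⟩
    have hCauchyB : UniformCauchySeqOn (fun n => f (φ n)) Filter.atTop
        (Metric.closedBall z₀ ε) := by
      rw [Metric.uniformCauchySeqOn_iff] at hCauchyS ⊢
      intro δ hδ
      obtain ⟨Nn, hNn⟩ := hCauchyS (δ / 2) (by positivity)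
      refine ⟨Nn, fun m hm n hn x hx => ?_⟩
      have hdiff : DiffContOnCl ℂ (fun z => f (φ m) z - f (φ n) z) (Metric.ball z₀ ε) := by
        have hdf : DifferentiableOn ℂ (fun z => f (φ m) z - f (φ n) z)
            (Metric.closedBall z₀ ε) :=
          (((hol _ (hf𝓕 (φ m))).sub (hol _ (hf𝓕 (φ n))))).mono hballD
        exact (hdf.mono Metric.closure_ball_subset_closedBall).diffContOnCl
      have hfront : ∀ z ∈ frontier (Metric.ball z₀ ε),
          ‖f (φ m) z - f (φ n) z‖ ≤ δ / 2 := by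
        rw [frontier_ball z₀ hε.ne']
        intro z hz
        have := hNn m hm n hn z hz
        rw [dist_eq_norm] at this
        exact this.le
      have hxcl : x ∈ closure (Metric.ball z₀ ε) := by
        rw [closure_ball z₀ hε.ne']; exact hx
      have hmax := Complex.norm_le_of_forall_mem_frontier_norm_le
        Metric.isBounded_ball hdiff hfront hxcl
      rw [dist_eq_norm]
      calc ‖f (φ m) x - f (φ n) x‖ ≤ δ / 2 := hmax
        _ < δ := by linarith
    set G : ℂ → ℂ := fun x => limUnder Filter.atTop (fun n => f (φ n) x) with hG
    have hgt : ∀ x ∈ Metric.closedBall z₀ ε,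
        Filter.Tendsto (fun n => f (φ n) x) Filter.atTop (𝓝 (G x)) :=
      fun x hx => (hCauchyB.cauchySeq hx).tendsto_limUnder
    have hTU : TendstoUniformlyOn (fun n => f (φ n)) G Filter.atTop
        (Metric.closedBall z₀ ε) := hCauchyB.tendstoUniformlyOn_of_tendsto hgt
    have hTLU : TendstoLocallyUniformlyOn (fun n => f (φ n)) G Filter.atTop
        (Metric.ball z₀ ε) :=
      hTU.tendstoLocallyUniformlyOn.mono Metric.ball_subset_closedBall
    have hgdiff : DifferentiableOn ℂ G (Metric.ball z₀ ε) :=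
      hTLU.differentiableOn
        (Filter.Eventually.of_forall fun n => (hol _ (hf𝓕 (φ n))).mono hballsubD)
        Metric.isOpen_ball
    exact hfbad φ hφ (Or.inl ⟨G, hgdiff, hTLU⟩)
end

section
/- Let 𝓕 be a family of holomorphic self-maps of a domain D ⊆ ℂ (each f ∈ 𝓕 is holomorphic on D with f(D) ⊆ D) such that f ∘ g = g ∘ f for all f, g ∈ 𝓕, and let V be a forward invariant connected component of the Fatou like set F(𝓕) (i.e. f(V) ⊆ V for all f ∈ 𝓕). If a constant c ∈ D is a limit function of 𝓕 on V, i.e. some sequence {f_n} in 𝓕 converges locally uniformly on V to the constant function c, then c is a fixed point of every f ∈ 𝓕: f(c) = c for all f ∈ 𝓕. -/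
open Filter Topology Set

/-- Let `𝓕` be a commuting family of holomorphic self-maps of a domain
`D`, and `V` a forward invariant connected component of `F(𝓕)`. If a constant `c ∈ D` is a
limit function of `𝓕` on `V`, then `c` is a fixed point of every `f ∈ 𝓕`. -/
theorem constant_limit_is_fixed_point
    (D : Set ℂ) (hD : IsOpen D) (hDconn : IsConnected D)
    (𝓕 : Set (ℂ → ℂ)) (hol : ∀ f ∈ 𝓕, DifferentiableOn ℂ f D)
    (hmaps : ∀ f ∈ 𝓕, Set.MapsTo f D D)
    (hcomm : ∀ f ∈ 𝓕, ∀ g ∈ 𝓕, f ∘ g = g ∘ f)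
    (V : Set ℂ) (x : ℂ) (hx : x ∈ FatouSet D 𝓕)
    (hV : V = connectedComponentIn (FatouSet D 𝓕) x)
    (hfwd : ∀ f ∈ 𝓕, f '' V ⊆ V)
    (c : ℂ) (hc : c ∈ D)
    (f : ℕ → ℂ → ℂ) (hf : ∀ n, f n ∈ 𝓕)
    (hlim : TendstoLocallyUniformlyOn (fun n => f n) (fun _ => c) Filter.atTop V) :
    ∀ g ∈ 𝓕, g c = c := by
  intro g hg
  have hxV : x ∈ V := hV ▸ mem_connectedComponentIn hx
  have hVD : V ⊆ D := by
    rw [hV]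
    exact (connectedComponentIn_subset _ _).trans (fun z hz => hz.1)
  have hgxV : g x ∈ V := hfwd g hg ⟨x, hxV, rfl⟩
  -- f n (g x) → c
  have h1 : Tendsto (fun n => f n (g x)) atTop (𝓝 c) := hlim.tendsto_at hgxV
  -- f n x → c, so g (f n x) → g c
  have h2 : Tendsto (fun n => f n x) atTop (𝓝 c) := hlim.tendsto_at hxV
  have hgcont : ContinuousAt g c :=
    (hol g hg).continuousOn.continuousAt (hD.mem_nhds hc)
  have h3 : Tendsto (fun n => g (f n x)) atTop (𝓝 (g c)) := hgcont.tendsto.comp h2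
  have heq : (fun n => g (f n x)) = fun n => f n (g x) := by
    funext n
    exact (congrFun (hcomm (f n) (hf n) g hg) x).symm
  rw [heq] at h3
  exact tendsto_nhds_unique h3 h1
end
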